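/- Combining the previous facts: if Tr_B[U(ρ_A ⊗ |ψ_k⟩⟨ψ_k|)U†] = |e⟩⟨e| for orthonormal {|ψ_k⟩}_{k=1}^m and all k, then for any coefficients a_k with Σ|a_k|² = 1 and nonzero superposition |φ⟩ = Σ_k a_k|ψ_k⟩ (normalized), Tr_B[U(ρ_A ⊗ |φ⟩⟨φ|)U†] = |e⟩⟨e|. -/

import Mathlib

/-!
The map `Φ X = Tr_B[U (ρ_A ⊗ X) U†]` is linear, positive, and multiplies traces by `Tr ρ_A = 1`.
Since `∑ₖ |ψₖ⟩⟨ψₖ| - |φ⟩⟨φ| = ∑ₖ |ψₖ - āₖ φ⟩⟨ψₖ - āₖ φ|` is positive, monotonicity of `Φ` gives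
`0 ≤ Φ |φ⟩⟨φ| ≤ ∑ₖ Φ |ψₖ⟩⟨ψₖ| = m |e⟩⟨e|`. A positive matrix dominated by a multiple of the
pure state `|e⟩⟨e|` vanishes on `e^⊥`, so it is a multiple of `|e⟩⟨e|`, and trace one (`φ` is a
unit vector by orthonormality) forces the multiple to be `1`.
-/

open Matrix Kronecker ComplexOrder

/-- A density matrix: positive semidefinite with unit trace. -/
def IsDensityMatrix {n : Type*} [Fintype n] [DecidableEq n]
    (ρ : Matrix n n ℂ) : Prop :=
  ρ.PosSemidef ∧ ρ.trace = 1

/-- Partial trace over the second (B) tensor factor. -/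
noncomputable def ptraceB {a b : Type*} [Fintype a] [Fintype b]
    (M : Matrix (a × b) (a × b) ℂ) : Matrix a a ℂ :=
  fun i j => ∑ k : b, M (i, k) (j, k)

open scoped MatrixOrder

section PartialTrace

variable {a b : Type*} [Fintype a] [Fintype b]

lemma ptraceB_eq_sum_submatrix (M : Matrix (a × b) (a × b) ℂ) :
    ptraceB M = ∑ k : b, M.submatrix (·, k) (·, k) := by
  ext i j
  simp [ptraceB, Matrix.sum_apply]

lemma ptraceB_add (M N : Matrix (a × b) (a × b) ℂ) :
    ptraceB (M + N) = ptraceB M + ptraceB N := by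
  ext i j
  simp [ptraceB, Finset.sum_add_distrib]

lemma ptraceB_smul (c : ℂ) (M : Matrix (a × b) (a × b) ℂ) :
    ptraceB (c • M) = c • ptraceB M := by
  ext i j
  simp [ptraceB, Finset.mul_sum]

lemma trace_ptraceB (M : Matrix (a × b) (a × b) ℂ) : (ptraceB M).trace = M.trace := by
  simp [ptraceB, Matrix.trace, Fintype.sum_prod_type]

lemma Matrix.PosSemidef.ptraceB {M : Matrix (a × b) (a × b) ℂ} (hM : M.PosSemidef) :
    (ptraceB M).PosSemidef := by
  rw [ptraceB_eq_sum_submatrix]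
  exact posSemidef_sum _ fun k _ => hM.submatrix _

end PartialTrace

section ReducedChannel

variable {a b : Type*} [Fintype a] [Fintype b]

noncomputable def reducedChannel (U : Matrix (a × b) (a × b) ℂ) (ρ : Matrix a a ℂ) :
    Matrix b b ℂ →ₗ[ℂ] Matrix a a ℂ where
  toFun X := ptraceB (U * (ρ ⊗ₖ X) * Uᴴ)
  map_add' X Y := by rw [kronecker_add, Matrix.mul_add, Matrix.add_mul, ptraceB_add]
  map_smul' c X := by
    rw [kronecker_smul, Matrix.mul_smul, Matrix.smul_mul, ptraceB_smul, RingHom.id_apply]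

variable (U : Matrix (a × b) (a × b) ℂ) {ρ : Matrix a a ℂ}

@[simp]
lemma reducedChannel_apply (X : Matrix b b ℂ) :
    reducedChannel U ρ X = ptraceB (U * (ρ ⊗ₖ X) * Uᴴ) := rfl

lemma trace_reducedChannel [DecidableEq a] [DecidableEq b] (hU : U ∈ unitaryGroup (a × b) ℂ)
    (X : Matrix b b ℂ) :
    (reducedChannel U ρ X).trace = ρ.trace * X.trace := by
  rw [reducedChannel_apply, trace_ptraceB, trace_mul_cycle, ← star_eq_conjTranspose,
    Unitary.star_mul_self_of_mem hU, Matrix.one_mul, trace_kronecker]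

lemma reducedChannel_mono (hρ : ρ.PosSemidef) : Monotone (reducedChannel U ρ) := by
  intro X Y hXY
  rw [le_iff, ← map_sub]
  exact ((hρ.kronecker hXY).mul_mul_conjTranspose_same U).ptraceB

end ReducedChannel

section RankOne

variable {𝕜 n ι : Type*} [RCLike 𝕜] [Fintype n]

lemma star_dotProduct_self_eq_sum_norm_sq (v : n → 𝕜) :
    star v ⬝ᵥ v = ((∑ i, ‖v i‖ ^ 2 : ℝ) : 𝕜) := by
  simp [dotProduct, RCLike.conj_mul]

lemma star_dotProduct_self_sum_smul [Fintype ι] [DecidableEq ι] {ψ : ι → n → 𝕜}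
    (horth : ∀ k l, star (ψ k) ⬝ᵥ ψ l = if k = l then 1 else 0) (a : ι → 𝕜) :
    star (∑ k, a k • ψ k) ⬝ᵥ ∑ k, a k • ψ k = star a ⬝ᵥ a := by
  simp only [star_sum, star_smul, sum_dotProduct, dotProduct_sum, smul_dotProduct,
    dotProduct_smul, horth]
  simp [dotProduct, mul_comm]

lemma vecMulVec_star_sum_smul_le [Fintype ι] (ψ : ι → n → 𝕜) {a : ι → 𝕜}
    (ha : star a ⬝ᵥ a = 1) :
    vecMulVec (∑ k, a k • ψ k) (star (∑ k, a k • ψ k)) ≤ ∑ k, vecMulVec (ψ k) (star (ψ k)) := by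
  set φ := ∑ k, a k • ψ k with hφ
  have hsos : ∑ k, vecMulVec (ψ k) (star (ψ k)) - vecMulVec φ (star φ)
      = ∑ k, vecMulVec (ψ k - star (a k) • φ) (star (ψ k - star (a k) • φ)) := by
    ext i j
    have hi : ∑ k, a k * ψ k i = φ i := by simp [hφ]
    have hj : ∑ k, star (a k) * star (ψ k j) = star (φ j) := by simp [hφ, star_sum]
    have ha' : ∑ k, star (a k) * a k = 1 := ha
    simp only [Matrix.sub_apply, Matrix.sum_apply, vecMulVec_apply, Pi.sub_apply, Pi.star_apply,
      Pi.smul_apply, smul_eq_mul, star_sub, star_mul', star_star, mul_sub, sub_mul,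
      Finset.sum_sub_distrib]
    have h1 : ∑ k, star (a k) * φ i * star (ψ k j) = φ i * star (φ j) := by
      rw [← hj, Finset.mul_sum]
      exact Finset.sum_congr rfl fun k _ => by ring
    have h2 : ∑ k, ψ k i * (a k * star (φ j)) = φ i * star (φ j) := by
      rw [← hi, Finset.sum_mul]
      exact Finset.sum_congr rfl fun k _ => by ring
    have h3 : ∑ k, star (a k) * φ i * (a k * star (φ j)) = φ i * star (φ j) := by
      rw [← one_mul (φ i * star (φ j)), ← ha', Finset.sum_mul]
      exact Finset.sum_congr rfl fun k _ => by ring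
    rw [h1, h2, h3]
    ring
  rw [le_iff, hsos]
  exact posSemidef_sum _ fun k _ => posSemidef_vecMulVec_self_star _

lemma eq_vecMulVec_of_mulVec_eq_zero {e : n → 𝕜} (he : star e ⬝ᵥ e = 1) {A : Matrix n n 𝕜}
    (hA : ∀ v, star e ⬝ᵥ v = 0 → A *ᵥ v = 0) : A = vecMulVec (A *ᵥ e) (star e) := by
  refine ext_iff_mulVec.mpr fun v => ?_
  have hv : star e ⬝ᵥ (v - (star e ⬝ᵥ v) • e) = 0 := by
    rw [dotProduct_sub, dotProduct_smul, he, smul_eq_mul, mul_one, sub_self]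
  have hAv := hA _ hv
  rw [mulVec_sub, mulVec_smul, sub_eq_zero] at hAv
  rw [hAv, vecMulVec_mulVec, op_smul_eq_smul]

lemma eq_vecMulVec_star_of_le_smul {e : n → 𝕜} (he : star e ⬝ᵥ e = 1)
    {σ : Matrix n n 𝕜} {c : 𝕜} (hσ : 0 ≤ σ) (hle : σ ≤ c • vecMulVec e (star e))
    (htr : σ.trace = 1) :
    σ = vecMulVec e (star e) := by
  have hσ' := hσ.posSemidef
  have hker : ∀ v, star e ⬝ᵥ v = 0 → σ *ᵥ v = 0 := by
    intro v hv
    have hPv : vecMulVec e (star e) *ᵥ v = 0 := by simp [vecMulVec_mulVec, hv]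
    have hneg := (le_iff.mp hle).dotProduct_mulVec_nonneg v
    rw [sub_mulVec, smul_mulVec, hPv, smul_zero, zero_sub, dotProduct_neg, neg_nonneg] at hneg
    exact (hσ'.dotProduct_mulVec_zero_iff v).mp
      (le_antisymm hneg (hσ'.dotProduct_mulVec_nonneg v))
  set f := σ *ᵥ e
  have hσf : σ = vecMulVec e (star f) := by
    conv_lhs => rw [← hσ'.isHermitian.eq, eq_vecMulVec_of_mulVec_eq_zero he hker]
    rw [conjTranspose_vecMulVec, star_star]
  have hfe : f = e := calc
    f = vecMulVec e (star f) *ᵥ e := by rw [← hσf]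
    _ = σ.trace • e := by
      rw [vecMulVec_mulVec, op_smul_eq_smul, hσf, trace_vecMulVec, dotProduct_comm]
    _ = e := by rw [htr, one_smul]
  rw [hσf, hfe]

end RankOne

/-- **Superpositions of DEH-achieving states also achieve DEH.**
If each orthonormal source state `ψ k` yields the pure output `|e⟩⟨e|`, then any
normalized superposition `φ = ∑ k, a k • ψ k` (with `∑ |a k|² = 1`) yields the
same output. -/
theorem DEH_superposition
    {dA dB : ℕ}
    (U : Matrix (Fin dA × Fin dB) (Fin dA × Fin dB) ℂ)
    (hU : U ∈ Matrix.unitaryGroup (Fin dA × Fin dB) ℂ)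
    (ρA : Matrix (Fin dA) (Fin dA) ℂ) (hρA : IsDensityMatrix ρA)
    (e : Fin dA → ℂ) (he : ∑ i, ‖e i‖ ^ 2 = 1)
    {m : ℕ} (ψ : Fin m → (Fin dB → ℂ))
    (horth : ∀ k l, ∑ x, (starRingEnd ℂ) (ψ k x) * ψ l x = if k = l then 1 else 0)
    (hDEH : ∀ k,
      ptraceB (U * (ρA ⊗ₖ Matrix.vecMulVec (ψ k) (star (ψ k))) * Uᴴ)
        = Matrix.vecMulVec e (star e))
    (a : Fin m → ℂ) (ha : ∑ k, ‖a k‖ ^ 2 = 1)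
    (φ : Fin dB → ℂ) (hφ : φ = ∑ k, a k • ψ k) :
    ptraceB (U * (ρA ⊗ₖ Matrix.vecMulVec φ (star φ)) * Uᴴ)
      = Matrix.vecMulVec e (star e) := by
  change reducedChannel U ρA (vecMulVec φ (star φ)) = _
  have he' : star e ⬝ᵥ e = 1 := by simp [star_dotProduct_self_eq_sum_norm_sq, he]
  have ha' : star a ⬝ᵥ a = 1 := by simp [star_dotProduct_self_eq_sum_norm_sq, ha]
  have hφ_unit : φ ⬝ᵥ star φ = 1 := by
    rw [dotProduct_comm, hφ, star_dotProduct_self_sum_smul horth, ha']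
  have hmono := reducedChannel_mono U hρA.1
  have hle : reducedChannel U ρA (vecMulVec φ (star φ)) ≤ (m : ℂ) • vecMulVec e (star e) := calc
    _ ≤ reducedChannel U ρA (∑ k, vecMulVec (ψ k) (star (ψ k))) :=
      hmono (hφ ▸ vecMulVec_star_sum_smul_le ψ ha')
    _ = (m : ℂ) • vecMulVec e (star e) := by simp [hDEH, Nat.cast_smul_eq_nsmul]
  refine eq_vecMulVec_star_of_le_smul he' ?_ hle ?_
  · simpa only [map_zero] using hmono (posSemidef_vecMulVec_self_star φ).nonneg
  · rw [trace_reducedChannel U hU, hρA.2, trace_vecMulVec, hφ_unit, one_mul]
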